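/- Let G be a finite simple graph and let k be an integer with 1 ≤ k ≤ Δ(G). Then L_{k+1}(G) ≥ L_k(G) + 1. -/

import Mathlib

open Finset

/-! A maximum `k`-packing `B` cannot be all of `V`, since the closed neighbourhood of a vertex of
maximum degree has `Δ(G) + 1 > k` vertices. Adding a vertex outside `B` raises every
`|N[v] ∩ B|` by at most one, so it yields a `(k + 1)`-packing of size `L_k(G) + 1`. -/

/-- A set `B` is a `k`-limited packing in `G` if every closed neighbourhood
contains at most `k` vertices of `B`. -/
def SimpleGraph.IsLimitedPacking {V : Type*} [Fintype V] [DecidableEq V]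
    (G : SimpleGraph V) [DecidableRel G.Adj] (k : ℕ) (B : Finset V) : Prop :=
  ∀ v : V, ((insert v (G.neighborFinset v)) ∩ B).card ≤ k

/-- The `k`-limited packing number of `G`. -/
noncomputable def SimpleGraph.limitedPackingNumber {V : Type*} [Fintype V] [DecidableEq V]
    (G : SimpleGraph V) [DecidableRel G.Adj] (k : ℕ) : ℕ :=
  sSup {n : ℕ | ∃ B : Finset V, G.IsLimitedPacking k B ∧ B.card = n}

namespace SimpleGraph

variable {V : Type*} [Fintype V] [DecidableEq V] (G : SimpleGraph V) [DecidableRel G.Adj]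

lemma bddAbove_limitedPackingSizes (k : ℕ) :
    BddAbove {n : ℕ | ∃ B : Finset V, G.IsLimitedPacking k B ∧ B.card = n} := by
  refine ⟨Fintype.card V, ?_⟩
  rintro _ ⟨B, -, rfl⟩
  exact card_le_univ B

lemma exists_isLimitedPacking_card_eq_limitedPackingNumber (k : ℕ) :
    ∃ B : Finset V, G.IsLimitedPacking k B ∧ B.card = G.limitedPackingNumber k :=
  Nat.sSup_mem (s := {n | ∃ B : Finset V, G.IsLimitedPacking k B ∧ B.card = n})
    ⟨0, ∅, fun v => by simp, rfl⟩ (G.bddAbove_limitedPackingSizes k)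

variable {G}

lemma IsLimitedPacking.card_le_limitedPackingNumber {k : ℕ} {B : Finset V}
    (hB : G.IsLimitedPacking k B) : B.card ≤ G.limitedPackingNumber k :=
  le_csSup (G.bddAbove_limitedPackingSizes k) ⟨B, hB, rfl⟩

lemma IsLimitedPacking.succ_insert {k : ℕ} {B : Finset V} (hB : G.IsLimitedPacking k B) (v : V) :
    G.IsLimitedPacking (k + 1) (insert v B) := fun u =>
  calc (insert u (G.neighborFinset u) ∩ insert v B).card
      ≤ (insert v (insert u (G.neighborFinset u) ∩ B)).card := by
        refine card_le_card fun x hx => ?_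
        simp only [mem_inter, mem_insert] at hx ⊢
        tauto
    _ ≤ (insert u (G.neighborFinset u) ∩ B).card + 1 := card_insert_le _ _
    _ ≤ k + 1 := Nat.add_le_add_right (hB u) 1

lemma IsLimitedPacking.maxDegree_le_sub_one_of_univ {k : ℕ} (h : G.IsLimitedPacking k univ) :
    G.maxDegree ≤ k - 1 := by
  refine G.maxDegree_le_of_forall_degree_le _ fun v => ?_
  have hv := h v
  rw [inter_univ, card_insert_of_notMem (G.notMem_neighborFinset_self v),
    card_neighborFinset_eq_degree] at hv
  omega

end SimpleGraph

/-- If `1 ≤ k ≤ Δ(G)`, then `L_{k+1}(G) ≥ L_k(G) + 1`. -/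
theorem limitedPackingNumber_succ_ge {V : Type*} [Fintype V] [DecidableEq V]
    (G : SimpleGraph V) [DecidableRel G.Adj] (k : ℕ)
    (hk1 : 1 ≤ k) (hk2 : k ≤ G.maxDegree) :
    G.limitedPackingNumber k + 1 ≤ G.limitedPackingNumber (k + 1) := by
  obtain ⟨B, hB, hcard⟩ := G.exists_isLimitedPacking_card_eq_limitedPackingNumber k
  obtain ⟨v, hv⟩ : ∃ v, v ∉ B := by
    by_contra! hall
    have := (eq_univ_of_forall hall ▸ hB).maxDegree_le_sub_one_of_univ
    omega
  have := (hB.succ_insert v).card_le_limitedPackingNumber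
  rwa [card_insert_of_notMem hv, hcard] at this
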